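/- arXiv:2101.09409 — 10 statements merged into one kernel-verified Lean document; each statement's English description precedes it below -/
import Mathlib

section
/- If n : m α satisfies n >>= (fun _ => mzero) = mzero, then for every Boolean p, guard p >>= (fun _ => n) = n >>= fun x => guard p >>= fun _ => pure x. -/
/-- `guard` built from a failure operation `mzero`. -/
def mguard {m : Type → Type} [Monad m] (mzero : {α : Type} → m α) (b : Bool) : m PUnit :=
  if b then pure PUnit.unit else mzero

theorem guard_commute {m : Type → Type} [Monad m] [LawfulMonad m]
    (mzero : {α : Type} → m α) (mplus : {α : Type} → m α → m α → m α)
    (mplus_assoc : ∀ {α : Type} (a b c : m α), mplus (mplus a b) c = mplus a (mplus b c))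
    (mzero_left : ∀ {α : Type} (a : m α), mplus mzero a = a)
    (mzero_right : ∀ {α : Type} (a : m α), mplus a mzero = a)
    (left_distr : ∀ {α β : Type} (a b : m α) (f : α → m β),
      mplus a b >>= f = mplus (a >>= f) (b >>= f))
    (left_zero : ∀ {α β : Type} (f : α → m β), (mzero : m α) >>= f = mzero)
    {α : Type} (n : m α)
    (hn : (n >>= fun _ => (mzero : m α)) = mzero) :
    ∀ (p : Bool),
      (mguard (m := m) mzero p >>= fun _ => n)
        = n >>= fun x => mguard (m := m) mzero p >>= fun _ => pure x := by
  intro p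
  cases p with
  | true =>
    simp [mguard]
  | false =>
    show ((mzero : m PUnit) >>= fun _ => n) = n >>= fun x => (mzero : m PUnit) >>= fun _ => pure x
    rw [left_zero]
    have : (fun x : α => (mzero : m PUnit) >>= fun _ => pure x) = fun _ => (mzero : m α) := by
      funext x; exact left_zero _
    rw [this, hn]
end

section
/- For every op : σ → α → σ, every st : σ, and every xs : List α, pure (scanlp op st xs) = protect (scanlM op st xs). That is, the pure prefix-scan can be computed by a stateful foldr whose net effect on the state is cancelled by protect. -/
/-- The prefix scan: `foldl` applied to every non-empty prefix. -/
def scanlp {σ α : Type} (op : σ → α → σ) : σ → List α → List σ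
  | _, [] => []
  | st, x :: xs => op st x :: scanlp op (op st x) xs

/-- Backup the state, run a computation, restore the state. -/
def protect {m : Type → Type} [Monad m] {σ β : Type}
    (get : m σ) (put : σ → m PUnit) (n : m β) : m β :=
  get >>= fun ini => n >>= fun x => put ini >>= fun _ => pure x

/-- The stateful scan, implemented as a stateful `foldr`. -/
def scanlM {m : Type → Type} [Monad m] {σ α : Type}
    (get : m σ) (put : σ → m PUnit) (op : σ → α → σ) (st : σ) (xs : List α) : m (List σ) :=
  put st >>= fun _ =>
    xs.foldr
      (fun x n => get >>= fun st =>
        (put (op st x) >>= fun _ => n) >>= fun ys => pure (op st x :: ys))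
      (pure [])

theorem scanlp_scanlM {m : Type → Type} [Monad m] [LawfulMonad m] {σ : Type}
    (get : m σ) (put : σ → m PUnit)
    (put_put : ∀ st st' : σ, (put st >>= fun _ => put st') = put st')
    (put_get : ∀ st : σ, (put st >>= fun _ => get) = put st >>= fun _ => pure st)
    (get_put : get >>= put = pure PUnit.unit)
    (get_get : ∀ {β : Type} (k : σ → σ → m β),
      (get >>= fun st => get >>= k st) = get >>= fun st => k st st) :
    ∀ {α : Type} (op : σ → α → σ) (st : σ) (xs : List α),
      pure (scanlp op st xs) = protect get put (scanlM get put op st xs) := by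
  intro α op st xs
  have key : ∀ (xs : List α) (st : σ),
      (put st >>= fun _ =>
        xs.foldr
          (fun x n => get >>= fun st =>
            (put (op st x) >>= fun _ => n) >>= fun ys => pure (op st x :: ys))
          (pure [])) =
      put (xs.foldl op st) >>= fun _ => pure (scanlp op st xs) := by
    intro xs
    induction xs with
    | nil => intro st; rfl
    | cons x xs ih =>
      intro st
      simp only [List.foldr_cons, List.foldl_cons, scanlp]
      calc (put st >>= fun _ => get >>= fun s =>
              (put (op s x) >>= fun _ => xs.foldr
                (fun x n => get >>= fun st =>
                  (put (op st x) >>= fun _ => n) >>= fun ys => pure (op st x :: ys))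
                (pure [])) >>= fun ys => pure (op s x :: ys))
          = (put st >>= fun _ => get) >>= fun s =>
              (put (op s x) >>= fun _ => xs.foldr
                (fun x n => get >>= fun st =>
                  (put (op st x) >>= fun _ => n) >>= fun ys => pure (op st x :: ys))
                (pure [])) >>= fun ys => pure (op s x :: ys) := by
            rw [bind_assoc]
        _ = (put st >>= fun _ => pure st) >>= fun s =>
              (put (op s x) >>= fun _ => xs.foldr
                (fun x n => get >>= fun st =>
                  (put (op st x) >>= fun _ => n) >>= fun ys => pure (op st x :: ys))
                (pure [])) >>= fun ys => pure (op s x :: ys) := by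
            rw [put_get]
        _ = put st >>= fun _ =>
              (put (op st x) >>= fun _ => xs.foldr
                (fun x n => get >>= fun st =>
                  (put (op st x) >>= fun _ => n) >>= fun ys => pure (op st x :: ys))
                (pure [])) >>= fun ys => pure (op st x :: ys) := by
            simp [bind_assoc]
        _ = (put st >>= fun _ => put (op st x)) >>= fun _ =>
              (xs.foldr
                (fun x n => get >>= fun st =>
                  (put (op st x) >>= fun _ => n) >>= fun ys => pure (op st x :: ys))
                (pure [])) >>= fun ys => pure (op st x :: ys) := by
            simp [bind_assoc]
        _ = (put (op st x) >>= fun _ => xs.foldr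
                (fun x n => get >>= fun st =>
                  (put (op st x) >>= fun _ => n) >>= fun ys => pure (op st x :: ys))
                (pure [])) >>= fun ys => pure (op st x :: ys) := by
            rw [put_put, bind_assoc]
        _ = (put (xs.foldl op (op st x)) >>= fun _ =>
              pure (scanlp op (op st x) xs)) >>= fun ys => pure (op st x :: ys) := by
            rw [ih]
        _ = put (xs.foldl op (op st x)) >>= fun _ =>
              pure (op st x :: scanlp op (op st x) xs) := by
            simp [bind_assoc]
  unfold protect scanlM
  rw [key]
  symm
  calc (get >>= fun ini =>
          (put (xs.foldl op st) >>= fun _ => pure (scanlp op st xs)) >>= fun x =>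
            put ini >>= fun _ => pure x)
      = get >>= fun ini => (put (xs.foldl op st) >>= fun _ => put ini) >>= fun _ =>
          pure (scanlp op st xs) := by simp [bind_assoc]
    _ = get >>= fun ini => put ini >>= fun _ => pure (scanlp op st xs) := by
        simp only [put_put]
    _ = (get >>= put) >>= fun _ => pure (scanlp op st xs) := by rw [bind_assoc]
    _ = pure (scanlp op st xs) := by rw [get_put]; simp
end

section
/- If, in addition to the nondeterminism laws, right-distributivity holds (n >>= (fun x => mplus (f₁ x) (f₂ x)) = mplus (n >>= f₁) (n >>= f₂) for all n, f₁, f₂), then mplus is commutative: mplus a b = mplus b a for all a, b : m α. -/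
theorem mplus_comm_of_right_distr {m : Type → Type} [Monad m] [LawfulMonad m]
    (mzero : {α : Type} → m α) (mplus : {α : Type} → m α → m α → m α)
    (mplus_assoc : ∀ {α : Type} (a b c : m α), mplus (mplus a b) c = mplus a (mplus b c))
    (mzero_left : ∀ {α : Type} (a : m α), mplus mzero a = a)
    (mzero_right : ∀ {α : Type} (a : m α), mplus a mzero = a)
    (left_distr : ∀ {α β : Type} (a b : m α) (f : α → m β),
      mplus a b >>= f = mplus (a >>= f) (b >>= f))
    (left_zero : ∀ {α β : Type} (f : α → m β), (mzero : m α) >>= f = mzero)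
    (right_distr : ∀ {α β : Type} (n : m α) (f₁ f₂ : α → m β),
      (n >>= fun x => mplus (f₁ x) (f₂ x)) = mplus (n >>= f₁) (n >>= f₂)) :
    ∀ {α : Type} (a b : m α), mplus a b = mplus b a := by
  intro α a b
  have key := right_distr (mplus (pure true) (pure false))
    (fun x => if x then mzero else b) (fun x => if x then a else mzero)
  simp only [left_distr, pure_bind, reduceIte, show (false = true) = False from by simp, if_false] at key
  rw [mzero_left, mzero_right, mzero_left, mzero_right] at key
  exact key
end

section
/- Define ndOf (xs : List α) : m α := List.foldr (fun x n => mplus (pure x) n) mzero xs, the finite nondeterministic choice among the pure values in xs. Then for every xs : List α, every stmt : m β, and every f : α → β → m γ, stmt >>= (fun y => ndOf xs >>= fun x => f x y) = ndOf xs >>= (fun x => stmt >>= fun y => f x y). In other words, nondeterministic computations presented as a finite choice among pure values commute with arbitrary monadic computations. -/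
/-- Finite nondeterministic choice among the pure values in a list. -/
def ndOf {m : Type → Type} [Monad m] (mzero : {α : Type} → m α)
    (mplus : {α : Type} → m α → m α → m α) {α : Type} (xs : List α) : m α :=
  List.foldr (fun x n => mplus (pure x) n) mzero xs

theorem ndOf_commutes {m : Type → Type} [Monad m] [LawfulMonad m]
    (mzero : {α : Type} → m α) (mplus : {α : Type} → m α → m α → m α)
    (mplus_assoc : ∀ {α : Type} (a b c : m α), mplus (mplus a b) c = mplus a (mplus b c))
    (mzero_left : ∀ {α : Type} (a : m α), mplus mzero a = a)
    (mzero_right : ∀ {α : Type} (a : m α), mplus a mzero = a)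
    (left_distr : ∀ {α β : Type} (a b : m α) (f : α → m β),
      mplus a b >>= f = mplus (a >>= f) (b >>= f))
    (left_zero : ∀ {α β : Type} (f : α → m β), (mzero : m α) >>= f = mzero)
    (right_distr : ∀ {α β : Type} (n : m α) (f₁ f₂ : α → m β),
      (n >>= fun x => mplus (f₁ x) (f₂ x)) = mplus (n >>= f₁) (n >>= f₂))
    (right_zero : ∀ {α β : Type} (n : m α), (n >>= fun _ => (mzero : m β)) = mzero) :
    ∀ {α β γ : Type} (xs : List α) (stmt : m β) (f : α → β → m γ),
      (stmt >>= fun y => ndOf (m := m) @mzero @mplus xs >>= fun x => f x y)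
        = ndOf (m := m) @mzero @mplus xs >>= fun x => stmt >>= fun y => f x y := by
  intro α β γ xs stmt f
  induction xs with
  | nil =>
    simp only [ndOf, List.foldr_nil, left_zero, right_zero]
  | cons x t ih =>
    simp only [ndOf, List.foldr_cons] at *
    simp only [left_distr]
    have : (stmt >>= fun y =>
        mplus ((pure x : m α) >>= fun x => f x y)
          (List.foldr (fun x n => mplus (pure x) n) mzero t >>= fun x => f x y))
        = mplus (stmt >>= fun y => (pure x : m α) >>= fun x => f x y)
          (stmt >>= fun y => List.foldr (fun x n => mplus (pure x) n) mzero t >>= fun x => f x y) :=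
      right_distr _ _ _
    rw [this, ih]
    simp
end

section
/- Say m₁ : m α commutes with stmt : m β when stmt >>= (fun y => m₁ >>= fun x => f x y) = m₁ >>= (fun x => stmt >>= fun y => f x y) for all γ and all f : α → β → m γ. Assume right-distributivity holds (n >>= (fun x => mplus (f₁ x) (f₂ x)) = mplus (n >>= f₁) (n >>= f₂) for all n, f₁, f₂). If m₁ commutes with stmt and m₂ commutes with stmt, then mplus m₁ m₂ commutes with stmt. -/
theorem mplus_commutes_with {m : Type → Type} [Monad m] [LawfulMonad m]
    (mzero : {α : Type} → m α) (mplus : {α : Type} → m α → m α → m α)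
    (mplus_assoc : ∀ {α : Type} (a b c : m α), mplus (mplus a b) c = mplus a (mplus b c))
    (mzero_left : ∀ {α : Type} (a : m α), mplus mzero a = a)
    (mzero_right : ∀ {α : Type} (a : m α), mplus a mzero = a)
    (left_distr : ∀ {α β : Type} (a b : m α) (f : α → m β),
      mplus a b >>= f = mplus (a >>= f) (b >>= f))
    (left_zero : ∀ {α β : Type} (f : α → m β), (mzero : m α) >>= f = mzero)
    (right_distr : ∀ {α β : Type} (n : m α) (f₁ f₂ : α → m β),
      (n >>= fun x => mplus (f₁ x) (f₂ x)) = mplus (n >>= f₁) (n >>= f₂))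
    {α β : Type} (m₁ m₂ : m α) (stmt : m β)
    (h₁ : ∀ {γ : Type} (f : α → β → m γ),
      (stmt >>= fun y => m₁ >>= fun x => f x y) = m₁ >>= fun x => stmt >>= fun y => f x y)
    (h₂ : ∀ {γ : Type} (f : α → β → m γ),
      (stmt >>= fun y => m₂ >>= fun x => f x y) = m₂ >>= fun x => stmt >>= fun y => f x y) :
    ∀ {γ : Type} (f : α → β → m γ),
      (stmt >>= fun y => mplus m₁ m₂ >>= fun x => f x y)
        = mplus m₁ m₂ >>= fun x => stmt >>= fun y => f x y := by
  intro γ f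
  calc (stmt >>= fun y => mplus m₁ m₂ >>= fun x => f x y)
      = stmt >>= fun y => mplus (m₁ >>= fun x => f x y) (m₂ >>= fun x => f x y) := by
        simp only [left_distr]
    _ = mplus (stmt >>= fun y => m₁ >>= fun x => f x y)
          (stmt >>= fun y => m₂ >>= fun x => f x y) := right_distr _ _ _
    _ = mplus (m₁ >>= fun x => stmt >>= fun y => f x y)
          (m₂ >>= fun x => stmt >>= fun y => f x y) := by rw [h₁, h₂]
    _ = mplus m₁ m₂ >>= fun x => stmt >>= fun y => f x y := (left_distr _ _ _).symm
end

section
/- For every op : σ → α → σ, every ok : σ → Bool, and every xs : List α, (List.foldr otimes (pure []) xs) >>= (fun ys => guard (ys.all ok) >>= fun _ => pure xs) = List.foldr odot (pure []) xs. That is, filtering the result of the stateful scan-foldr by the predicate 'all intermediate states satisfy ok' fuses into a single foldr that checks ok at each step. -/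
/-- The step function of the stateful scan-`foldr`. -/
def otimesF {m : Type → Type} [Monad m] {σ α : Type}
    (get : m σ) (put : σ → m PUnit) (op : σ → α → σ)
    (x : α) (n : m (List σ)) : m (List σ) :=
  get >>= fun st => (put (op st x) >>= fun _ => n) >>= fun ys => pure (op st x :: ys)

/-- The step function of the fused, guarded stateful `foldr`. -/
def odotF {m : Type → Type} [Monad m] (mzero : {α : Type} → m α) {σ α : Type}
    (get : m σ) (put : σ → m PUnit) (op : σ → α → σ) (ok : σ → Bool)
    (x : α) (n : m (List α)) : m (List α) :=
  get >>= fun st => mguard (m := m) @mzero (ok (op st x)) >>= fun _ =>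
    put (op st x) >>= fun _ => (n >>= fun ys => pure (x :: ys))

theorem foldr_guard_fusion {m : Type → Type} [Monad m] [LawfulMonad m]
    (mzero : {α : Type} → m α) (mplus : {α : Type} → m α → m α → m α)
    (mplus_assoc : ∀ {α : Type} (a b c : m α), mplus (mplus a b) c = mplus a (mplus b c))
    (mzero_left : ∀ {α : Type} (a : m α), mplus mzero a = a)
    (mzero_right : ∀ {α : Type} (a : m α), mplus a mzero = a)
    (left_distr : ∀ {α β : Type} (a b : m α) (f : α → m β),
      mplus a b >>= f = mplus (a >>= f) (b >>= f))
    (left_zero : ∀ {α β : Type} (f : α → m β), (mzero : m α) >>= f = mzero)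
    (right_distr : ∀ {α β : Type} (n : m α) (f₁ f₂ : α → m β),
      (n >>= fun x => mplus (f₁ x) (f₂ x)) = mplus (n >>= f₁) (n >>= f₂))
    (right_zero : ∀ {α β : Type} (n : m α), (n >>= fun _ => (mzero : m β)) = mzero)
    {σ : Type} (get : m σ) (put : σ → m PUnit)
    (put_put : ∀ st st' : σ, (put st >>= fun _ => put st') = put st')
    (put_get : ∀ st : σ, (put st >>= fun _ => get) = put st >>= fun _ => pure st)
    (get_put : get >>= put = pure PUnit.unit)
    (get_get : ∀ {β : Type} (k : σ → σ → m β),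
      (get >>= fun st => get >>= k st) = get >>= fun st => k st st) :
    ∀ {α : Type} (op : σ → α → σ) (ok : σ → Bool) (xs : List α),
      (List.foldr (otimesF get put op) (pure []) xs >>= fun ys =>
          mguard (m := m) @mzero (ys.all ok) >>= fun _ => pure xs)
        = List.foldr (odotF @mzero get put op ok) (pure []) xs := by
  intro α op ok xs
  have comm : ∀ {β γ : Type} (n : m β) (b : Bool) (f : β → m γ),
      (n >>= fun y => mguard (m := m) @mzero b >>= fun _ => f y)
        = mguard (m := m) @mzero b >>= fun _ => n >>= f := by
    intro β γ n b f
    cases b <;> simp [mguard, left_zero, right_zero]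
  induction xs with
  | nil => simp [mguard]
  | cons x xs ih =>
      simp only [List.foldr_cons, otimesF, odotF, bind_assoc]
      apply congrArg
      funext st
      rw [← ih]
      simp only [bind_assoc, pure_bind, List.all_cons]
      have split : ∀ (ys : List σ) ,
          (mguard (m := m) @mzero (ok (op st x) && ys.all ok) >>= fun _ => pure (x :: xs))
            = mguard (m := m) @mzero (ok (op st x)) >>= fun _ =>
              mguard (m := m) @mzero (ys.all ok) >>= fun _ => pure (x :: xs) := by
        intro ys
        cases h : ok (op st x) <;> simp [mguard, left_zero]
      simp only [split]
      rw [show (put (op st x) >>= fun _ =>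
            List.foldr (otimesF get put op) (pure []) xs >>= fun ys =>
              mguard (m := m) @mzero (ok (op st x)) >>= fun _ =>
                mguard (m := m) @mzero (ys.all ok) >>= fun _ => pure (x :: xs))
          = put (op st x) >>= fun _ =>
              mguard (m := m) @mzero (ok (op st x)) >>= fun _ =>
                List.foldr (otimesF get put op) (pure []) xs >>= fun ys =>
                  mguard (m := m) @mzero (ys.all ok) >>= fun _ => pure (x :: xs)
          from by rw [comm]]
      rw [comm]
end

section
/- For every op : σ → α → σ, every ok : σ → Bool, every st : σ, and every xs : List α, filt (fun zs => (scanlp op st zs).all ok) xs = protect (put st >>= fun _ => List.foldr odot (pure []) xs). -/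
/-- Monadic filtering by a Boolean predicate. -/
def filt {m : Type → Type} [Monad m] (mzero : {α : Type} → m α) {α : Type}
    (p : α → Bool) (x : α) : m α :=
  mguard (m := m) @mzero (p x) >>= fun _ => pure x

theorem filt_scanlp_foldr {m : Type → Type} [Monad m] [LawfulMonad m]
    (mzero : {α : Type} → m α) (mplus : {α : Type} → m α → m α → m α)
    (mplus_assoc : ∀ {α : Type} (a b c : m α), mplus (mplus a b) c = mplus a (mplus b c))
    (mzero_left : ∀ {α : Type} (a : m α), mplus mzero a = a)
    (mzero_right : ∀ {α : Type} (a : m α), mplus a mzero = a)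
    (left_distr : ∀ {α β : Type} (a b : m α) (f : α → m β),
      mplus a b >>= f = mplus (a >>= f) (b >>= f))
    (left_zero : ∀ {α β : Type} (f : α → m β), (mzero : m α) >>= f = mzero)
    (right_distr : ∀ {α β : Type} (n : m α) (f₁ f₂ : α → m β),
      (n >>= fun x => mplus (f₁ x) (f₂ x)) = mplus (n >>= f₁) (n >>= f₂))
    (right_zero : ∀ {α β : Type} (n : m α), (n >>= fun _ => (mzero : m β)) = mzero)
    {σ : Type} (get : m σ) (put : σ → m PUnit)
    (put_put : ∀ st st' : σ, (put st >>= fun _ => put st') = put st')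
    (put_get : ∀ st : σ, (put st >>= fun _ => get) = put st >>= fun _ => pure st)
    (get_put : get >>= put = pure PUnit.unit)
    (get_get : ∀ {β : Type} (k : σ → σ → m β),
      (get >>= fun st => get >>= k st) = get >>= fun st => k st st) :
    ∀ {α : Type} (op : σ → α → σ) (ok : σ → Bool) (st : σ) (xs : List α),
      filt (m := m) @mzero (fun zs => (scanlp op st zs).all ok) xs
        = protect get put
            (put st >>= fun _ => List.foldr (odotF @mzero get put op ok) (pure []) xs) := by

  intro α op ok st xs
  have hpg : ∀ {β : Type} (st : σ) (k : σ → m β),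
      (put st >>= fun _ => get >>= k) = put st >>= fun _ => k st := by
    intro β st k
    rw [← bind_assoc, put_get, bind_assoc]
    simp
  have key : ∀ (st : σ) (xs : List α),
      (put st >>= fun _ => List.foldr (odotF @mzero get put op ok) (pure []) xs)
        = mguard (m := m) @mzero ((scanlp op st xs).all ok) >>= fun _ =>
            put (xs.foldl op st) >>= fun _ => pure xs := by
    intro st xs
    induction xs generalizing st with
    | nil => simp [scanlp, mguard]
    | cons x xs ih =>
      simp only [List.foldr_cons]
      show (put st >>= fun _ => odotF @mzero get put op ok x
            (List.foldr (odotF @mzero get put op ok) (pure []) xs)) = _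
      have hodot : ∀ (n : m (List α)), odotF @mzero get put op ok x n
          = get >>= fun s => mguard (m := m) @mzero (ok (op s x)) >>= fun _ =>
              put (op s x) >>= fun _ => (n >>= fun ys => pure (x :: ys)) := fun _ => rfl
      rw [hodot, hpg]
      cases hx : ok (op st x) with
      | false =>
        simp [mguard, hx, left_zero, right_zero, scanlp]
      | true =>
        have h1 : (put st >>= fun _ => mguard (m := m) @mzero true >>= fun _ =>
            put (op st x) >>= fun _ =>
              (List.foldr (odotF @mzero get put op ok) (pure []) xs >>= fun ys => pure (x :: ys)))
            = (put (op st x) >>= fun _ =>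
                List.foldr (odotF @mzero get put op ok) (pure []) xs) >>= fun ys =>
                  pure (x :: ys) := by
          show (put st >>= fun _ => (pure PUnit.unit : m PUnit) >>= fun _ => _) = _
          rw [pure_bind, ← bind_assoc, put_put, bind_assoc]
        rw [h1, ih]
        simp [mguard, hx, scanlp, bind_assoc]
  rw [key]
  unfold protect filt
  cases hb : (scanlp op st xs).all ok with
  | false =>
    simp [mguard, hb, left_zero, right_zero]
  | true =>
    simp only [mguard, hb, if_pos, pure_bind, bind_assoc]
    have : (get >>= fun ini => put (xs.foldl op st) >>= fun _ => put ini >>= fun _ => pure xs)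
        = get >>= fun ini => put ini >>= fun _ => pure xs := by
      apply bind_congr; intro ini
      rw [← bind_assoc, put_put]
    rw [this, ← bind_assoc, get_put, pure_bind]
end

section
/- Given p : α → σ → Bool, next : α → σ → σ, and res : α → δ → δ, define odotG (x : α) (n : m δ) : m δ := get >>= fun st => guard (p x st) >>= fun _ => put (next x st) >>= fun _ => (res x <$> n). Suppose n : m β satisfies: (a) n >>= (fun _ => mzero) = mzero; (b) n commutes with get, i.e., for all g : β → σ → m γ, n >>= (fun y => get >>= g y) = get >>= fun s => n >>= fun y => g y s; and (c) n commutes with put, i.e., for all st : σ and g : β → m γ, n >>= (fun y => put st >>= fun _ => g y) = put st >>= fun _ => (n >>= g). Then for all x : α and k : β → m δ, n >>= (fun y => odotG x (k y)) = odotG x (n >>= k). -/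
/-- The generalised guarded stateful step function. -/
def odotG {m : Type → Type} [Monad m] (mzero : {α : Type} → m α) {σ α δ : Type}
    (get : m σ) (put : σ → m PUnit)
    (p : α → σ → Bool) (next : α → σ → σ) (res : α → δ → δ)
    (x : α) (n : m δ) : m δ :=
  get >>= fun st => mguard (m := m) @mzero (p x st) >>= fun _ =>
    put (next x st) >>= fun _ => (res x <$> n)

theorem fusion_condition_odot {m : Type → Type} [Monad m] [LawfulMonad m]
    (mzero : {α : Type} → m α) (mplus : {α : Type} → m α → m α → m α)
    (mplus_assoc : ∀ {α : Type} (a b c : m α), mplus (mplus a b) c = mplus a (mplus b c))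
    (mzero_left : ∀ {α : Type} (a : m α), mplus mzero a = a)
    (mzero_right : ∀ {α : Type} (a : m α), mplus a mzero = a)
    (left_distr : ∀ {α β : Type} (a b : m α) (f : α → m β),
      mplus a b >>= f = mplus (a >>= f) (b >>= f))
    (left_zero : ∀ {α β : Type} (f : α → m β), (mzero : m α) >>= f = mzero)
    {σ : Type} (get : m σ) (put : σ → m PUnit)
    (put_put : ∀ st st' : σ, (put st >>= fun _ => put st') = put st')
    (put_get : ∀ st : σ, (put st >>= fun _ => get) = put st >>= fun _ => pure st)
    (get_put : get >>= put = pure PUnit.unit)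
    (get_get : ∀ {β : Type} (k : σ → σ → m β),
      (get >>= fun st => get >>= k st) = get >>= fun st => k st st)
    {α β δ : Type}
    (p : α → σ → Bool) (next : α → σ → σ) (res : α → δ → δ)
    (n : m β)
    (ha : (n >>= fun _ => (mzero : m β)) = mzero)
    (hget : ∀ {γ : Type} (g : β → σ → m γ),
      (n >>= fun y => get >>= g y) = get >>= fun s => n >>= fun y => g y s)
    (hput : ∀ {γ : Type} (st : σ) (g : β → m γ),
      (n >>= fun y => put st >>= fun _ => g y) = put st >>= fun _ => (n >>= g)) :
    ∀ (x : α) (k : β → m δ),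
      (n >>= fun y => odotG @mzero get put p next res x (k y))
        = odotG @mzero get put p next res x (n >>= k) := by
  intro x k
  unfold odotG
  rw [hget]
  apply bind_congr
  intro st
  cases h : p x st with
  | false =>
    simp only [mguard, h, Bool.false_eq_true, if_false, left_zero]
    calc (n >>= fun _ => (mzero : m δ))
        = (n >>= fun _ => ((mzero : m β) >>= fun _ => (mzero : m δ))) := by
          simp [left_zero]
      _ = (n >>= fun _ => (mzero : m β)) >>= fun _ => (mzero : m δ) := by
          rw [bind_assoc]
      _ = mzero := by rw [ha, left_zero]
  | true =>
    simp only [mguard, h, reduceIte, pure_bind]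
    rw [hput]
    apply bind_congr
    intro _
    simp [map_bind, bind_map_left]
end

section
/- Suppose that for all x : α, z : β, and k : List α → m γ, unfoldM z >>= (fun xs => otimes x (k xs)) = otimes x (unfoldM z >>= k). Then for every y : β, unfoldM y >>= (fun xs => List.foldr otimes e xs) = hyloM y. That is, the monadic unfold followed by the monadic foldr fuses into the monadic hylomorphism. -/
/-- Monadic unfold on a well-founded relation `r`: the step `f` produces
only `r`-smaller seeds. -/
def unfoldM {m : Type → Type} [Monad m] {α β : Type}
    (r : β → β → Prop) (hwf : WellFounded r)
    (p : β → Bool) (f : (y : β) → p y = false → m {xz : α × β // r xz.2 y})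
    (y : β) : m (List α) :=
  hwf.fix
    (fun y ih =>
      if h : p y = true then pure []
      else
        f y (Bool.eq_false_iff.mpr h) >>= fun xz =>
          ih xz.1.2 xz.2 >>= fun xs => pure (xz.1.1 :: xs))
    y

/-- Monadic hylomorphism on a well-founded relation `r`. -/
def hyloM {m : Type → Type} [Monad m] {α β γ : Type}
    (r : β → β → Prop) (hwf : WellFounded r)
    (p : β → Bool) (f : (y : β) → p y = false → m {xz : α × β // r xz.2 y})
    (otimes : α → m γ → m γ) (e : m γ)
    (y : β) : m γ :=
  hwf.fix
    (fun y ih =>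
      if h : p y = true then e
      else
        f y (Bool.eq_false_iff.mpr h) >>= fun xz =>
          otimes xz.1.1 (ih xz.1.2 xz.2))
    y

theorem unfoldM_eq {m : Type → Type} [Monad m] {α β : Type}
    (r : β → β → Prop) (hwf : WellFounded r)
    (p : β → Bool) (f : (y : β) → p y = false → m {xz : α × β // r xz.2 y})
    (y : β) :
    unfoldM r hwf p f y =
      if h : p y = true then pure []
      else
        f y (Bool.eq_false_iff.mpr h) >>= fun xz =>
          unfoldM r hwf p f xz.1.2 >>= fun xs => pure (xz.1.1 :: xs) := by
  unfold unfoldM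
  rw [WellFounded.fix_eq]

theorem hyloM_eq {m : Type → Type} [Monad m] {α β γ : Type}
    (r : β → β → Prop) (hwf : WellFounded r)
    (p : β → Bool) (f : (y : β) → p y = false → m {xz : α × β // r xz.2 y})
    (otimes : α → m γ → m γ) (e : m γ) (y : β) :
    hyloM r hwf p f otimes e y =
      if h : p y = true then e
      else
        f y (Bool.eq_false_iff.mpr h) >>= fun xz =>
          otimes xz.1.1 (hyloM r hwf p f otimes e xz.1.2) := by
  unfold hyloM
  rw [WellFounded.fix_eq]

theorem hylo_fusion {m : Type → Type} [Monad m] [LawfulMonad m] {α β γ : Type}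
    (r : β → β → Prop) (hwf : WellFounded r)
    (p : β → Bool) (f : (y : β) → p y = false → m {xz : α × β // r xz.2 y})
    (otimes : α → m γ → m γ) (e : m γ)
    (hcomm : ∀ (x : α) (z : β) (k : List α → m γ),
      (unfoldM r hwf p f z >>= fun xs => otimes x (k xs))
        = otimes x (unfoldM r hwf p f z >>= k)) :
    ∀ y : β,
      (unfoldM r hwf p f y >>= fun xs => List.foldr otimes e xs)
        = hyloM r hwf p f otimes e y := by
  intro y
  induction y using hwf.induction with
  | _ y ih =>
    rw [unfoldM_eq, hyloM_eq]
    by_cases h : p y = true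
    · simp [h]
    · rw [dif_neg h, dif_neg h]
      rw [bind_assoc]
      congr 1
      funext xz
      rw [bind_assoc]
      simp only [pure_bind, List.foldr_cons]
      rw [hcomm xz.1.1 xz.1.2 (fun xs => List.foldr otimes e xs), ih _ xz.2]
end

section
/- For every xs : List α, every stmt : m β, and every f : List α → β → m γ, stmt >>= (fun y => perm xs >>= fun zs => f zs y) = perm xs >>= (fun zs => stmt >>= fun y => f zs y). That is, the nondeterministic permutation computation perm xs commutes with every monadic computation. -/
/-- Nondeterministically pick one element of a list, returning it together
with the remaining elements (in order), and a proof on lengths. -/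
def select {m : Type → Type} [Monad m]
    (mzero : {α : Type} → m α) (mplus : {α : Type} → m α → m α → m α) {α : Type} :
    (xs : List α) → m {p : α × List α // p.2.length + 1 = xs.length}
  | [] => mzero
  | x :: xs =>
      mplus (pure ⟨(x, xs), rfl⟩)
        (select @mzero @mplus xs >>= fun q =>
          match q with
          | ⟨(y, ys), h⟩ => pure ⟨(y, x :: ys), congrArg Nat.succ h⟩)

/-- Nondeterministically compute a permutation of a list. -/
def perm {m : Type → Type} [Monad m]
    (mzero : {α : Type} → m α) (mplus : {α : Type} → m α → m α → m α) {α : Type} :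
    List α → m (List α)
  | [] => pure []
  | x :: xs =>
      select @mzero @mplus (x :: xs) >>= fun q =>
        match q with
        | ⟨(y, ys), _h⟩ =>
            perm @mzero @mplus ys >>= fun zs => pure (y :: zs)
  termination_by xs => xs.length
  decreasing_by simp_all

def Commutes {m : Type → Type} [Monad m] {α : Type} (n : m α) : Prop :=
  ∀ (β γ : Type) (stmt : m β) (f : α → β → m γ),
    (stmt >>= fun y => n >>= fun z => f z y) = n >>= fun z => stmt >>= fun y => f z y

theorem commutes_pure {m : Type → Type} [Monad m] [LawfulMonad m] {α : Type} (a : α) :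
    Commutes (pure a : m α) := by
  intro β γ stmt f; simp

theorem commutes_bind {m : Type → Type} [Monad m] [LawfulMonad m] {α α' : Type}
    {n : m α} {k : α → m α'} (hn : Commutes n) (hk : ∀ x, Commutes (k x)) :
    Commutes (n >>= k) := by
  intro β γ stmt f
  simp only [bind_assoc]
  rw [hn _ _ stmt (fun x y => k x >>= fun z => f z y)]
  exact bind_congr fun x => hk x _ _ stmt f

section Laws
variable {m : Type → Type} [Monad m] [LawfulMonad m]
    (mzero : {α : Type} → m α) (mplus : {α : Type} → m α → m α → m α)
    (left_distr : ∀ {α β : Type} (a b : m α) (f : α → m β),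
      mplus a b >>= f = mplus (a >>= f) (b >>= f))
    (left_zero : ∀ {α β : Type} (f : α → m β), (mzero : m α) >>= f = mzero)
    (right_distr : ∀ {α β : Type} (n : m α) (f₁ f₂ : α → m β),
      (n >>= fun x => mplus (f₁ x) (f₂ x)) = mplus (n >>= f₁) (n >>= f₂))
    (right_zero : ∀ {α β : Type} (n : m α), (n >>= fun _ => (mzero : m β)) = mzero)

include left_zero right_zero in
theorem commutes_mzero {α : Type} : Commutes (mzero : m α) := by
  intro β γ stmt f
  rw [left_zero]
  calc (stmt >>= fun y => mzero >>= fun z => f z y)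
      = stmt >>= fun _ => mzero := by
        exact bind_congr fun y => left_zero _
    _ = mzero := right_zero _

include left_distr right_distr in
theorem commutes_mplus {α : Type} {a b : m α} (ha : Commutes a) (hb : Commutes b) :
    Commutes (mplus a b) := by
  intro β γ stmt f
  calc (stmt >>= fun y => mplus a b >>= fun z => f z y)
      = stmt >>= fun y => mplus (a >>= fun z => f z y) (b >>= fun z => f z y) :=
        bind_congr fun y => left_distr _ _ _
    _ = mplus (stmt >>= fun y => a >>= fun z => f z y)
        (stmt >>= fun y => b >>= fun z => f z y) := right_distr _ _ _
    _ = mplus (a >>= fun z => stmt >>= fun y => f z y)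
        (b >>= fun z => stmt >>= fun y => f z y) := by rw [ha _ _ stmt, hb _ _ stmt]
    _ = mplus a b >>= fun z => stmt >>= fun y => f z y := (left_distr _ _ _).symm

include left_distr left_zero right_distr right_zero in
theorem select_commutes {α : Type} (xs : List α) :
    Commutes (select @mzero @mplus xs) := by
  induction xs with
  | nil => exact commutes_mzero mzero left_zero right_zero
  | cons x xs ih =>
      rw [select]
      exact commutes_mplus mplus left_distr right_distr (commutes_pure _)
        (commutes_bind ih fun q => commutes_pure _)

include left_distr left_zero right_distr right_zero in
theorem perm_commutes_aux {α : Type} (xs : List α) :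
    Commutes (perm @mzero @mplus xs) := by
  suffices H : ∀ n (xs : List α), xs.length = n → Commutes (perm @mzero @mplus xs) from
    H _ xs rfl
  intro n
  induction n using Nat.strong_induction_on with
  | _ n ih =>
    intro xs hn
    match xs with
    | [] => rw [perm]; exact commutes_pure _
    | x :: xs =>
      rw [perm]
      refine commutes_bind
        (select_commutes mzero mplus left_distr left_zero right_distr right_zero _)
        fun q => ?_
      obtain ⟨⟨y, ys⟩, h⟩ := q
      exact commutes_bind
        (ih ys.length (by simp only [List.length_cons] at hn h; omega) ys rfl)
        (fun zs => commutes_pure _)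

end Laws

theorem perm_commutes {m : Type → Type} [Monad m] [LawfulMonad m]
    (mzero : {α : Type} → m α) (mplus : {α : Type} → m α → m α → m α)
    (mplus_assoc : ∀ {α : Type} (a b c : m α), mplus (mplus a b) c = mplus a (mplus b c))
    (mzero_left : ∀ {α : Type} (a : m α), mplus mzero a = a)
    (mzero_right : ∀ {α : Type} (a : m α), mplus a mzero = a)
    (left_distr : ∀ {α β : Type} (a b : m α) (f : α → m β),
      mplus a b >>= f = mplus (a >>= f) (b >>= f))
    (left_zero : ∀ {α β : Type} (f : α → m β), (mzero : m α) >>= f = mzero)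
    (right_distr : ∀ {α β : Type} (n : m α) (f₁ f₂ : α → m β),
      (n >>= fun x => mplus (f₁ x) (f₂ x)) = mplus (n >>= f₁) (n >>= f₂))
    (right_zero : ∀ {α β : Type} (n : m α), (n >>= fun _ => (mzero : m β)) = mzero) :
    ∀ {α β γ : Type} (xs : List α) (stmt : m β) (f : List α → β → m γ),
      (stmt >>= fun y => perm @mzero @mplus xs >>= fun zs => f zs y)
        = perm @mzero @mplus xs >>= fun zs => stmt >>= fun y => f zs y := by
  intro α β γ xs stmt f
  exact perm_commutes_aux mzero mplus left_distr left_zero right_distr right_zero xs _ _ stmt f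
end
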